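/- Let a, b ∈ ℂ, let P(z) = z² + az + b, and set E_P := {z ∈ ℂ : P(z) ∈ [−2,2]}. Then for every integer n ≥ 1, t_{2n}(E_P) = 2; that is, inf{ sup_{z ∈ E_P} |Q(z)| : Q ∈ ℂ[X] monic of degree 2n } = 2. -/

import Mathlib

/-- The `n`-th Chebyshev norm of a set `E ⊆ ℂ`:
`t_n(E) = inf { sup_{z ∈ E} |P(z)| : P monic of degree n }`. -/
noncomputable def chebNorm (E : Set ℂ) (n : ℕ) : ℝ :=
  sInf { r : ℝ | ∃ P : Polynomial ℂ, P.Monic ∧ P.natDegree = n ∧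
    r = ⨆ z ∈ E, ‖P.eval z‖ }

/-- The preimage `E_P = { z : z² + a z + b ∈ [-2, 2] }` of `[-2,2]` under a
monic quadratic polynomial. -/
def Equad (a b : ℂ) : Set ℂ :=
  { z : ℂ | ∃ x ∈ Set.Icc (-2 : ℝ) 2, (x : ℂ) = z ^ 2 + a * z + b }

/-! If `Q` is monic of degree `2n`, summing `Q` over the two points of each fibre of
`P z = z ^ 2 + a z + b` gives a polynomial in `w = P z` of degree `n` with leading coefficient `2`.
On `[-2, 2]` it is bounded by twice the sup of `‖Q‖` on `E_P`, while Chebyshev's inequality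
(Lagrange interpolation at the Chebyshev nodes) says that a polynomial of degree at most `n` with
`n`-th coefficient `c` has sup at least `2 ‖c‖` on `[-2, 2]`; hence `t_{2n}(E_P) ≥ 2`. Equality
is attained by `C_n ∘ P`, where `C_n (2 cos θ) = 2 cos (n θ)` is the monic rescaled Chebyshev
polynomial. -/

open Polynomial Finset

namespace Polynomial.Chebyshev

lemma abs_prod_node_sub_node {n i : ℕ} (hi : i ≤ n) :
    |∏ j ∈ (range (n + 1)).erase i, (node n i - node n j)| =
      (-1) ^ i * ∏ j ∈ (range (n + 1)).erase i, (node n i - node n j) := by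
  rw [← abs_of_pos (zero_lt_prod_node_sub_node hi), abs_mul, abs_neg_one_pow, one_mul]

lemma coeff_T_natCast (n : ℕ) : (T ℝ n).coeff n = 2 ^ (n - 1) := by
  simpa [leadingCoeff] using leadingCoeff_T ℝ n

/-- The Lagrange weights of the `n`-th coefficient at the Chebyshev nodes alternate in sign like
the values `(-1) ^ i` of `T n` there, so their absolute values add up to the leading coefficient
of `T n`. -/
lemma sum_inv_abs_prod_node_sub_node (n : ℕ) :
    ∑ i ∈ range (n + 1), |∏ j ∈ (range (n + 1)).erase i, (node n i - node n j)|⁻¹ =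
      2 ^ (n - 1) := by
  have hT := Lagrange.coeff_eq_sum (strictAntiOn_node n).injOn (P := T ℝ n)
    (by rw [degree_T, card_range]; exact_mod_cast Nat.lt_succ_self n)
  rw [card_range, Nat.add_sub_cancel, coeff_T_natCast] at hT
  rw [hT]
  refine sum_congr rfl fun i hi => ?_
  have hi' : i ≤ n := Nat.lt_succ_iff.mp (mem_range.mp hi)
  rw [abs_prod_node_sub_node hi', eval_T_real_node (mem_Iic.mpr hi'), mul_inv, div_eq_mul_inv,
    ← inv_pow, inv_neg_one]

theorem norm_coeff_le_of_forall_norm_eval_le {n : ℕ} {P : ℂ[X]} (hP : P.natDegree ≤ n) {M : ℝ}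
    (hM : ∀ x ∈ Set.Icc (-1 : ℝ) 1, ‖P.eval (x : ℂ)‖ ≤ M) :
    ‖P.coeff n‖ ≤ 2 ^ (n - 1) * M := by
  have hinj : Set.InjOn (fun i => (node n i : ℂ)) (range (n + 1)) :=
    Complex.ofReal_injective.comp_injOn (strictAntiOn_node n).injOn
  have hdeg : P.degree < (range (n + 1)).card := by
    rw [card_range]
    exact (degree_le_of_natDegree_le hP).trans_lt (by exact_mod_cast Nat.lt_succ_self n)
  have hcoeff := Lagrange.coeff_eq_sum hinj hdeg
  rw [card_range, Nat.add_sub_cancel] at hcoeff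
  calc ‖P.coeff n‖
      ≤ ∑ i ∈ range (n + 1), ‖P.eval (node n i : ℂ)‖ *
          |∏ j ∈ (range (n + 1)).erase i, (node n i - node n j)|⁻¹ := by
        rw [hcoeff]
        refine (norm_sum_le _ _).trans_eq (sum_congr rfl fun i _ => ?_)
        simp_rw [← Complex.ofReal_sub, ← Complex.ofReal_prod, norm_div, Complex.norm_real,
          Real.norm_eq_abs, div_eq_mul_inv]
    _ ≤ ∑ i ∈ range (n + 1), M * |∏ j ∈ (range (n + 1)).erase i, (node n i - node n j)|⁻¹ := by
        gcongr with i
        exact hM _ node_mem_Icc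
    _ = 2 ^ (n - 1) * M := by rw [← mul_sum, sum_inv_abs_prod_node_sub_node, mul_comm]

theorem two_mul_norm_coeff_le_of_forall_norm_eval_le {n : ℕ} (hn : n ≠ 0) {P : ℂ[X]}
    (hP : P.natDegree ≤ n) {M : ℝ} (hM : ∀ x ∈ Set.Icc (-2 : ℝ) 2, ‖P.eval (x : ℂ)‖ ≤ M) :
    2 * ‖P.coeff n‖ ≤ M := by
  have hPc : (P.comp (Polynomial.C 2 * X)).natDegree ≤ n :=
    natDegree_comp_le.trans (by rw [natDegree_C_mul_X 2 two_ne_zero, mul_one]; exact hP)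
  have h := norm_coeff_le_of_forall_norm_eval_le hPc fun x hx => by
    simpa using hM (2 * x) ⟨by linarith [hx.1], by linarith [hx.2]⟩
  obtain ⟨m, rfl⟩ := Nat.exists_eq_succ_of_ne_zero hn
  rw [comp_C_mul_X_coeff, norm_mul, norm_pow, Complex.norm_ofNat, Nat.succ_sub_one,
    pow_succ] at h
  have h2 : (0 : ℝ) < 2 ^ m := by positivity
  nlinarith

lemma natDegree_C_natCast (n : ℕ) : (C ℂ n).natDegree = n := by
  have h := congrArg natDegree (C_comp_two_mul_X ℂ n)
  rwa [← C_ofNat, natDegree_C_mul two_ne_zero, natDegree_T, natDegree_comp,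
    natDegree_C_mul_X 2 two_ne_zero, mul_one] at h

lemma monic_C_natCast {n : ℕ} (hn : n ≠ 0) : (C ℂ n).Monic := by
  have h := congrArg leadingCoeff (C_comp_two_mul_X ℂ n)
  rw [leadingCoeff_comp (by simp), natDegree_C_natCast, ← C_ofNat, leadingCoeff_C_mul_X,
    leadingCoeff_mul, leadingCoeff_C, leadingCoeff_T, Int.natAbs_natCast,
    ← pow_succ', Nat.sub_add_cancel (Nat.one_le_iff_ne_zero.mpr hn)] at h
  exact mul_right_cancel₀ (pow_ne_zero n two_ne_zero) (h.trans (one_mul _).symm)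

lemma norm_eval_C_le_two (n : ℕ) {x : ℝ} (hx : x ∈ Set.Icc (-2 : ℝ) 2) :
    ‖(C ℂ n).eval (x : ℂ)‖ ≤ 2 := by
  have hcos : 2 * Real.cos (Real.arccos (x / 2)) = x := by
    rw [Real.cos_arccos (by linarith [hx.1]) (by linarith [hx.2])]; ring
  rw [← hcos, ← complex_ofReal_eval_C, C_two_mul_real_cos, Complex.norm_real, Real.norm_eq_abs,
    abs_mul, abs_two]
  nlinarith [Real.abs_cos_le_one ((n : ℤ) * Real.arccos (x / 2))]

end Polynomial.Chebyshev

lemma IsCompact.le_biSup_of_continuousOn {X : Type*} [TopologicalSpace X] {E : Set X}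
    (hE : IsCompact E) {f : X → ℝ} (hf : ContinuousOn f E) {z : X} (hz : z ∈ E) :
    f z ≤ ⨆ z ∈ E, f z := by
  obtain ⟨B, hB⟩ := hE.bddAbove_image hf
  refine le_ciSup₂ (f := fun z (_ : z ∈ E) => f z) ⟨B, ?_⟩ z hz
  rintro _ ⟨_, ⟨y, rfl⟩, hy, rfl⟩
  exact hB ⟨y, hy, rfl⟩

lemma chebNorm_eq_of_le_of_exists {E : Set ℂ} {n : ℕ} {c : ℝ}
    (hle : ∀ P : ℂ[X], P.Monic → P.natDegree = n → c ≤ ⨆ z ∈ E, ‖P.eval z‖)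
    (hex : ∃ P : ℂ[X], P.Monic ∧ P.natDegree = n ∧ ⨆ z ∈ E, ‖P.eval z‖ ≤ c) :
    chebNorm E n = c := by
  obtain ⟨P, hPm, hPd, hPc⟩ := hex
  have hlow : c ∈ lowerBounds {r : ℝ | ∃ P : ℂ[X], P.Monic ∧ P.natDegree = n ∧
      r = ⨆ z ∈ E, ‖P.eval z‖} := by
    rintro r ⟨Q, hQm, hQd, rfl⟩
    exact hle Q hQm hQd
  exact le_antisymm (csInf_le_of_le ⟨c, hlow⟩ ⟨P, hPm, hPd, rfl⟩ hPc)
    (le_csInf ⟨_, P, hPm, hPd, rfl⟩ hlow)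

section Quadratic

variable (a b : ℂ)

noncomputable def quadPoly : ℂ[X] := X ^ 2 + (C a * X + C b)

lemma eval_quadPoly (z : ℂ) : (quadPoly a b).eval z = z ^ 2 + a * z + b := by
  simp [quadPoly, add_assoc]

lemma monic_quadPoly : (quadPoly a b).Monic := monic_X_pow_add degree_linear_lt

lemma natDegree_quadPoly : (quadPoly a b).natDegree = 2 := by
  rw [quadPoly, natDegree_add_eq_left_of_degree_lt (by rw [degree_X_pow]; exact degree_linear_lt),
    natDegree_X_pow]

lemma degree_quadPoly_pos : 0 < (quadPoly a b).degree := by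
  rw [degree_eq_natDegree (monic_quadPoly a b).ne_zero, natDegree_quadPoly]; norm_num

lemma exists_sq_add_mul_add_eq (w : ℂ) : ∃ z, z ^ 2 + a * z + b = w := by
  obtain ⟨z, hz⟩ := Complex.exists_root (degree_quadPoly_pos a (b - w))
  exact ⟨z, by rw [IsRoot, eval_quadPoly] at hz; linear_combination hz⟩

lemma Equad_eq_preimage :
    Equad a b = (quadPoly a b).eval ⁻¹' (Complex.ofReal '' Set.Icc (-2) 2) := by
  ext z
  simp [Equad, eval_quadPoly]

lemma isCompact_Equad : IsCompact (Equad a b) := by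
  rw [Equad_eq_preimage]
  exact (isProperMap_eval _ (degree_quadPoly_pos a b)).isCompact_preimage
    (isCompact_Icc.image Complex.continuous_ofReal)

variable {a b} in
lemma neg_sub_mem_Equad {z : ℂ} (hz : z ∈ Equad a b) : -a - z ∈ Equad a b := by
  obtain ⟨x, hx, hxz⟩ := hz
  exact ⟨x, hx, by rw [hxz]; ring⟩

/-- Newton's recursion for the power sums `z₁ ^ k + z₂ ^ k` of the roots of `z ^ 2 + a z + b = X`,
using `z₁ + z₂ = -a` and `z₁ z₂ = b - X`. -/
noncomputable def rootPowerSum : ℕ → ℂ[X]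
  | 0 => 2
  | 1 => C (-a)
  | k + 2 => C (-a) * rootPowerSum (k + 1) + (X - C b) * rootPowerSum k

lemma eval_rootPowerSum {w z : ℂ} (hz : z ^ 2 + a * z + b = w) (k : ℕ) :
    (rootPowerSum a b k).eval w = z ^ k + (-a - z) ^ k := by
  induction k using Nat.twoStepInduction with
  | zero => norm_num [rootPowerSum]
  | one => simp [rootPowerSum]
  | more k ih₁ ih₂ =>
    rw [rootPowerSum, eval_add, eval_mul, eval_mul, eval_C, eval_sub, eval_X, eval_C, ih₁, ih₂,
      ← hz]
    ring

lemma natDegree_rootPowerSum_le (k : ℕ) : (rootPowerSum a b k).natDegree ≤ k / 2 := by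
  induction k using Nat.twoStepInduction with
  | zero => simp [rootPowerSum]
  | one => simp [rootPowerSum]
  | more k ih₁ ih₂ =>
    refine (natDegree_add_le _ _).trans (max_le ?_ ?_)
    · exact (natDegree_C_mul_le _ _).trans (by omega)
    · refine natDegree_mul_le.trans ?_
      rw [natDegree_X_sub_C]
      omega

lemma coeff_rootPowerSum_two_mul (k : ℕ) : (rootPowerSum a b (2 * k)).coeff k = 2 := by
  induction k with
  | zero => simp [rootPowerSum]
  | succ k ih =>
    have h₁ := (natDegree_rootPowerSum_le a b (2 * k + 1)).trans_lt
      (show (2 * k + 1) / 2 < k + 1 by omega)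
    have h₀ := (natDegree_rootPowerSum_le a b (2 * k)).trans_lt (show 2 * k / 2 < k + 1 by omega)
    rw [show 2 * (k + 1) = 2 * k + 2 by ring, rootPowerSum, coeff_add, coeff_C_mul,
      coeff_eq_zero_of_natDegree_lt h₁, sub_mul, coeff_sub, coeff_X_mul, coeff_C_mul,
      coeff_eq_zero_of_natDegree_lt h₀, ih]
    simp

noncomputable def fiberSum (Q : ℂ[X]) : ℂ[X] :=
  ∑ j ∈ range (Q.natDegree + 1), C (Q.coeff j) * rootPowerSum a b j

variable (Q : ℂ[X])

lemma eval_fiberSum {w z : ℂ} (hz : z ^ 2 + a * z + b = w) :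
    (fiberSum a b Q).eval w = Q.eval z + Q.eval (-a - z) := by
  rw [fiberSum, eval_finsetSum, eval_eq_sum_range, eval_eq_sum_range, ← sum_add_distrib]
  refine sum_congr rfl fun j _ => ?_
  rw [eval_mul, eval_C, eval_rootPowerSum a b hz, mul_add]

lemma natDegree_fiberSum_le : (fiberSum a b Q).natDegree ≤ Q.natDegree / 2 :=
  natDegree_sum_le_of_forall_le _ _ fun j hj =>
    (natDegree_C_mul_le _ _).trans <| (natDegree_rootPowerSum_le a b j).trans <|
      Nat.div_le_div_right (Nat.lt_succ_iff.mp (mem_range.mp hj))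

lemma coeff_fiberSum_of_natDegree_eq {n : ℕ} (hQ : Q.natDegree = 2 * n) :
    (fiberSum a b Q).coeff n = 2 * Q.leadingCoeff := by
  rw [fiberSum, finsetSum_coeff, sum_eq_single (2 * n), coeff_C_mul,
    coeff_rootPowerSum_two_mul, leadingCoeff, hQ, mul_comm]
  · intro j hj hjn
    rw [coeff_C_mul, coeff_eq_zero_of_natDegree_lt (p := rootPowerSum a b j), mul_zero]
    have := natDegree_rootPowerSum_le a b j
    have := mem_range.mp hj
    omega
  · simp [hQ]

variable {a b Q} in
theorem two_le_of_forall_norm_eval_le {n : ℕ} (hn : n ≠ 0) (hQm : Q.Monic)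
    (hQd : Q.natDegree = 2 * n) {M : ℝ} (hM : ∀ z ∈ Equad a b, ‖Q.eval z‖ ≤ M) : 2 ≤ M := by
  have hfiber : ∀ x ∈ Set.Icc (-2 : ℝ) 2, ‖(fiberSum a b Q).eval (x : ℂ)‖ ≤ 2 * M := by
    intro x hx
    obtain ⟨z, hz⟩ := exists_sq_add_mul_add_eq a b x
    have hzE : z ∈ Equad a b := ⟨x, hx, hz.symm⟩
    rw [eval_fiberSum a b Q hz, two_mul]
    exact (norm_add_le _ _).trans (add_le_add (hM z hzE) (hM _ (neg_sub_mem_Equad hzE)))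
  have h := Chebyshev.two_mul_norm_coeff_le_of_forall_norm_eval_le hn
    ((natDegree_fiberSum_le a b Q).trans (by omega)) hfiber
  rw [coeff_fiberSum_of_natDegree_eq a b Q hQd, hQm.leadingCoeff] at h
  norm_num at h
  linarith

lemma norm_eval_C_comp_quadPoly_le_two (n : ℕ) {z : ℂ} (hz : z ∈ Equad a b) :
    ‖((Chebyshev.C ℂ n).comp (quadPoly a b)).eval z‖ ≤ 2 := by
  obtain ⟨x, hx, hxz⟩ := hz
  rw [eval_comp, eval_quadPoly, ← hxz]
  exact Chebyshev.norm_eval_C_le_two n hx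

end Quadratic

theorem chebNorm_quad_even_eq_two (a b : ℂ) (n : ℕ) (hn : 1 ≤ n) :
    chebNorm (Equad a b) (2 * n) = 2 := by
  have hn0 : n ≠ 0 := Nat.one_le_iff_ne_zero.mp hn
  refine chebNorm_eq_of_le_of_exists (fun Q hQm hQd => two_le_of_forall_norm_eval_le hn0 hQm hQd
    fun z hz => (isCompact_Equad a b).le_biSup_of_continuousOn Q.continuous.norm.continuousOn hz)
    ⟨(Chebyshev.C ℂ n).comp (quadPoly a b), ?_, ?_, ?_⟩
  · exact (Chebyshev.monic_C_natCast hn0).comp (monic_quadPoly a b)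
      (by rw [natDegree_quadPoly]; norm_num)
  · rw [natDegree_comp, Chebyshev.natDegree_C_natCast, natDegree_quadPoly, mul_comm]
  · exact Real.iSup_le (fun z => Real.iSup_le (norm_eval_C_comp_quadPoly_le_two a b n)
      zero_le_two) zero_le_two
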